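/- For every integer n ≥ 2 and every A = (a_{ij}) ∈ Δ_n^2 with a_{2,2} = 1, if n ≥ 4 then the bottom-right (n−2)×(n−2) submatrix C = (a_{ij})_{3≤i,j≤n} belongs to Δ_{n−2}^2, and all entries of A in rows 1,2 and columns 3,…,n and in rows 3,…,n and columns 1,2 are 0. -/
import Mathlib


/-- The integer encoded (in binary, most significant digit first) by the `i`-th row
of the binary matrix `A`, i.e. `x_i = ∑_j a_{ij} 2^{m-j}` (1-indexed). -/
def rowVal {n m : ℕ} (A : Fin n → Fin m → Fin 2) (i : Fin n) : ℕ :=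
  ∑ j : Fin m, (A i j : ℕ) * 2 ^ (m - 1 - (j : ℕ))

/-- The integer encoded by the `j`-th column of `A`, i.e. `y_j = ∑_i a_{ij} 2^{n-i}`. -/
def colVal {n m : ℕ} (A : Fin n → Fin m → Fin 2) (j : Fin m) : ℕ :=
  ∑ i : Fin n, (A i j : ℕ) * 2 ^ (n - 1 - (i : ℕ))

/-- `A ∈ 𝔠_{n×m}`: rows and columns sorted in lexicographically nondecreasing order. -/
def memC {n m : ℕ} (A : Fin n → Fin m → Fin 2) : Prop :=
  Monotone (rowVal A) ∧ Monotone (colVal A)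

/-- `A ∈ 𝔡_{n×m}`: rows and columns sorted in lexicographically nonincreasing order. -/
def memD {n m : ℕ} (A : Fin n → Fin m → Fin 2) : Prop :=
  Antitone (rowVal A) ∧ Antitone (colVal A)

/-- `Λ_n^k`: n×n binary matrices with exactly `k` ones in each row and each column. -/
def lambdaSet (n k : ℕ) : Set (Fin n → Fin n → Fin 2) :=
  {A | (∀ i, ∑ j, (A i j : ℕ) = k) ∧ (∀ j, ∑ i, (A i j : ℕ) = k)}

/-- `Γ_n^k = 𝔠_{n×n} ∩ Λ_n^k`. -/
def GammaSet (n k : ℕ) : Set (Fin n → Fin n → Fin 2) :=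
  {A | memC A} ∩ lambdaSet n k

/-- `Δ_n^k = 𝔡_{n×n} ∩ Λ_n^k`. -/
def DeltaSet (n k : ℕ) : Set (Fin n → Fin n → Fin 2) :=
  {A | memD A} ∩ lambdaSet n k

/-- `γ(n,k) = |Γ_n^k|`. -/
noncomputable def gammaCard (n k : ℕ) : ℕ := (GammaSet n k).ncard

/-- `δ(n,k) = |Δ_n^k|`. -/
noncomputable def deltaCard (n k : ℕ) : ℕ := (DeltaSet n k).ncard

lemma geomsum (n : ℕ) : ∑ i ∈ Finset.range n, 2 ^ i = 2 ^ n - 1 := by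
  induction n with
  | zero => simp
  | succ k ih =>
    rw [Finset.sum_range_succ, ih, pow_succ]
    have : 1 ≤ 2 ^ k := Nat.one_le_two_pow
    omega

lemma sum_lt_of_head_zero (n : ℕ) (v : Fin (n + 1) → Fin 2) (h : v 0 = 0) :
    ∑ j, (v j : ℕ) * 2 ^ (n - (j : ℕ)) < 2 ^ n := by
  rw [Fin.sum_univ_succ, h]
  simp only [Fin.val_zero, Nat.sub_zero, Fin.isValue, Fin.val_succ]
  have hb : ∑ j : Fin n, (v j.succ : ℕ) * 2 ^ (n - ((j : ℕ) + 1)) ≤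
      ∑ j : Fin n, 2 ^ (n - 1 - (j : ℕ)) := by
    apply Finset.sum_le_sum
    intro j _
    have : (v j.succ : ℕ) ≤ 1 := by omega
    have he : n - ((j : ℕ) + 1) = n - 1 - (j : ℕ) := by omega
    rw [he]
    calc (v j.succ : ℕ) * 2 ^ (n - 1 - (j : ℕ)) ≤ 1 * 2 ^ (n - 1 - (j : ℕ)) :=
      Nat.mul_le_mul_right _ this
    _ = 2 ^ (n - 1 - (j : ℕ)) := one_mul _
  have hg : ∑ j : Fin n, 2 ^ (n - 1 - (j : ℕ)) = 2 ^ n - 1 := by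
    rw [Fin.sum_univ_eq_sum_range (fun j => 2 ^ (n - 1 - j)) n, Finset.sum_range_reflect, geomsum]
  have h1 : 1 ≤ 2 ^ n := Nat.one_le_two_pow
  omega

lemma le_sum_of_one (n : ℕ) (v : Fin n → Fin 2) (k : Fin n) (h : v k = 1) :
    2 ^ (n - 1 - (k : ℕ)) ≤ ∑ j, (v j : ℕ) * 2 ^ (n - 1 - (j : ℕ)) := by
  have := Finset.single_le_sum (f := fun j : Fin n => (v j : ℕ) * 2 ^ (n - 1 - (j : ℕ)))
    (fun _ _ => Nat.zero_le _) (Finset.mem_univ k)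
  simp only [h] at this
  simpa using this


/-- Theorem (0-indexed): if `A ∈ Δ_n^2`, `n ≥ 2`, and `a_{11} = 1`, then whenever `n ≥ 4` the
bottom-right `(n-2)×(n-2)` submatrix belongs to `Δ_{n-2}^2`, and all entries of `A` in the first
two rows and last `n-2` columns, or last `n-2` rows and first two columns, vanish. -/
theorem delta_two_block_of_corner_one (n : ℕ) (hn : 2 ≤ n) (A : Fin n → Fin n → Fin 2)
    (hA : A ∈ DeltaSet n 2) (h22 : A ⟨1, by omega⟩ ⟨1, by omega⟩ = 1) :
    ∀ _ : 4 ≤ n,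
      ((fun (i j : Fin (n - 2)) =>
          A ⟨(i : ℕ) + 2, by have := i.isLt; omega⟩ ⟨(j : ℕ) + 2, by have := j.isLt; omega⟩)
        ∈ DeltaSet (n - 2) 2) ∧
      (∀ i j : Fin n,
        (((i : ℕ) < 2 ∧ 2 ≤ (j : ℕ)) ∨ (2 ≤ (i : ℕ) ∧ (j : ℕ) < 2)) → A i j = 0) := by
  obtain ⟨m, rfl⟩ : ∃ m, n = m + 2 := ⟨n - 2, by omega⟩
  intro hn4
  obtain ⟨⟨hx, hy⟩, hrow, hcol⟩ := hA
  have h11 : A 1 1 = 1 := by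
    have e : (1 : Fin (m + 2)) = ⟨1, by omega⟩ := Fin.ext (by simp)
    rw [e]; exact h22
  have hsumexp : ∀ (f : Fin (m + 2) → ℕ),
      ∑ k, f k = f 0 + f 1 + ∑ k : Fin m, f k.succ.succ := by
    intro f
    rw [Fin.sum_univ_succ, Fin.sum_univ_succ, Fin.succ_zero_eq_one]
    ring
  have hrowval : ∀ i : Fin (m + 2), rowVal A i
      = (A i 0 : ℕ) * 2 ^ (m + 1) + (A i 1 : ℕ) * 2 ^ m
        + ∑ j : Fin m, (A i j.succ.succ : ℕ) * 2 ^ (m - 1 - (j : ℕ)) := by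
    intro i
    rw [rowVal, hsumexp (fun j : Fin (m + 2) => (A i j : ℕ) * 2 ^ (m + 2 - 1 - (j : ℕ)))]
    simp only [Fin.val_zero, Fin.val_one, Fin.val_succ]
    have h0 : m + 2 - 1 - 0 = m + 1 := by omega
    have h1 : m + 2 - 1 - 1 = m := by omega
    rw [h0, h1]
    congr 1
    apply Finset.sum_congr rfl
    intro j _
    have he : m + 2 - 1 - ((j : ℕ) + 1 + 1) = m - 1 - (j : ℕ) := by omega
    rw [he]
  have hcolval : ∀ j : Fin (m + 2), colVal A j
      = (A 0 j : ℕ) * 2 ^ (m + 1) + (A 1 j : ℕ) * 2 ^ m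
        + ∑ i : Fin m, (A i.succ.succ j : ℕ) * 2 ^ (m - 1 - (i : ℕ)) := by
    intro j
    rw [colVal, hsumexp (fun i : Fin (m + 2) => (A i j : ℕ) * 2 ^ (m + 2 - 1 - (i : ℕ)))]
    simp only [Fin.val_zero, Fin.val_one, Fin.val_succ]
    have h0 : m + 2 - 1 - 0 = m + 1 := by omega
    have h1 : m + 2 - 1 - 1 = m := by omega
    rw [h0, h1]
    congr 1
    apply Finset.sum_congr rfl
    intro i _
    have he : m + 2 - 1 - ((i : ℕ) + 1 + 1) = m - 1 - (i : ℕ) := by omega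
    rw [he]
  -- Step 1
  have h10 : A 1 0 = 1 := by
    by_contra h
    have hz : A 1 0 = 0 := by omega
    have hc0 := hcol 0
    rw [hsumexp (fun i : Fin (m + 2) => (A i 0 : ℕ))] at hc0
    have hex : ∃ i : Fin m, A i.succ.succ 0 = 1 := by
      by_contra hall
      push_neg at hall
      have hzz : ∑ i : Fin m, (A i.succ.succ 0 : ℕ) = 0 :=
        Finset.sum_eq_zero (fun i _ => by have := hall i; omega)
      have h1lt : (A 0 0 : ℕ) < 2 := (A 0 0).isLt
      have h2z : (A 1 0 : ℕ) = 0 := by omega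
      omega
    obtain ⟨i, hi⟩ := hex
    have hge : 2 ^ (m + 1) ≤ rowVal A i.succ.succ :=
      le_sum_of_one (m + 2) (A i.succ.succ) 0 hi
    have hlt : rowVal A 1 < 2 ^ (m + 1) :=
      sum_lt_of_head_zero (m + 1) (A 1) hz
    have hle : rowVal A i.succ.succ ≤ rowVal A 1 := hx (by
      rw [Fin.le_def, Fin.val_one]
      simp [Fin.val_succ])
    omega
  -- Step 2
  have h01 : A 0 1 = 1 := by
    by_contra h
    have hz : A 0 1 = 0 := by omega
    have hr0 := hrow 0
    rw [hsumexp (fun j : Fin (m + 2) => (A 0 j : ℕ))] at hr0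
    have hex : ∃ j : Fin m, A 0 j.succ.succ = 1 := by
      by_contra hall
      push_neg at hall
      have hzz : ∑ j : Fin m, (A 0 j.succ.succ : ℕ) = 0 :=
        Finset.sum_eq_zero (fun j _ => by have := hall j; omega)
      have h1lt : (A 0 0 : ℕ) < 2 := (A 0 0).isLt
      have h2z : (A 0 1 : ℕ) = 0 := by omega
      omega
    obtain ⟨j, hj⟩ := hex
    have hge : 2 ^ (m + 1) ≤ colVal A j.succ.succ :=
      le_sum_of_one (m + 2) (fun i => A i j.succ.succ) 0 hj
    have hlt : colVal A 1 < 2 ^ (m + 1) :=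
      sum_lt_of_head_zero (m + 1) (fun i => A i 1) hz
    have hle : colVal A j.succ.succ ≤ colVal A 1 := hy (by
      rw [Fin.le_def, Fin.val_one]
      simp [Fin.val_succ])
    omega
  -- Step 3
  have h00 : A 0 0 = 1 := by
    by_contra h
    have hz : A 0 0 = 0 := by omega
    have hlt : rowVal A 0 < 2 ^ (m + 1) :=
      sum_lt_of_head_zero (m + 1) (A 0) hz
    have hge : 2 ^ (m + 1) ≤ rowVal A 1 :=
      le_sum_of_one (m + 2) (A 1) 0 h10
    have hle : rowVal A 1 ≤ rowVal A 0 := hx (Fin.zero_le 1)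
    omega
  -- zero rows/cols
  have hrz : ∀ r : Fin (m + 2), A r 0 = 1 → A r 1 = 1 → ∀ j : Fin m, A r j.succ.succ = 0 := by
    intro r h0 h1 j
    have h := hrow r
    rw [hsumexp (fun j : Fin (m + 2) => (A r j : ℕ))] at h
    simp only [h0, h1] at h
    have e1 : ((1 : Fin 2) : ℕ) = 1 := rfl
    have hzz : ∑ j : Fin m, (A r j.succ.succ : ℕ) = 0 := by omega
    have := (Finset.sum_eq_zero_iff).mp hzz j (Finset.mem_univ j)
    omega
  have hcz : ∀ c : Fin (m + 2), A 0 c = 1 → A 1 c = 1 → ∀ i : Fin m, A i.succ.succ c = 0 := by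
    intro c h0 h1 i
    have h := hcol c
    rw [hsumexp (fun i : Fin (m + 2) => (A i c : ℕ))] at h
    simp only [h0, h1] at h
    have e1 : ((1 : Fin 2) : ℕ) = 1 := rfl
    have hzz : ∑ i : Fin m, (A i.succ.succ c : ℕ) = 0 := by omega
    have := (Finset.sum_eq_zero_iff).mp hzz i (Finset.mem_univ i)
    omega
  have hvan : ∀ i j : Fin (m + 2),
      (((i : ℕ) < 2 ∧ 2 ≤ (j : ℕ)) ∨ (2 ≤ (i : ℕ) ∧ (j : ℕ) < 2)) → A i j = 0 := by
    intro i j hij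
    rcases hij with ⟨hi, hj⟩ | ⟨hi, hj⟩
    · have hjj : j = (⟨(j : ℕ) - 2, by have := j.isLt; omega⟩ : Fin m).succ.succ := by
        apply Fin.ext
        simp only [Fin.val_succ]
        omega
      have hii : i = 0 ∨ i = 1 := by
        have : (i : ℕ) = 0 ∨ (i : ℕ) = 1 := by omega
        rcases this with h | h
        · exact Or.inl (Fin.ext (by simp [h]))
        · exact Or.inr (Fin.ext (by simp [h]))
      rw [hjj]
      rcases hii with rfl | rfl
      · exact hrz 0 h00 h01 _
      · exact hrz 1 h10 h11 _
    · have hii : i = (⟨(i : ℕ) - 2, by have := i.isLt; omega⟩ : Fin m).succ.succ := by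
        apply Fin.ext
        simp only [Fin.val_succ]
        omega
      have hjj : j = 0 ∨ j = 1 := by
        have : (j : ℕ) = 0 ∨ (j : ℕ) = 1 := by omega
        rcases this with h | h
        · exact Or.inl (Fin.ext (by simp [h]))
        · exact Or.inr (Fin.ext (by simp [h]))
      rw [hii]
      rcases hjj with rfl | rfl
      · exact hcz 0 h00 h10 _
      · exact hcz 1 h01 h11 _
  have hAz2 : ∀ i : Fin m, (A i.succ.succ 0 : ℕ) = 0 ∧ (A i.succ.succ 1 : ℕ) = 0 := by
    intro i
    constructor
    · have := hcz 0 h00 h10 i; omega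
    · have := hcz 1 h01 h11 i; omega
  have hBz2 : ∀ j : Fin m, (A 0 j.succ.succ : ℕ) = 0 ∧ (A 1 j.succ.succ : ℕ) = 0 := by
    intro j
    constructor
    · have := hrz 0 h00 h01 j; omega
    · have := hrz 1 h10 h11 j; omega
  have key : ∀ (B : Fin m → Fin m → Fin 2),
      (∀ i j : Fin m, B i j = A i.succ.succ j.succ.succ) → B ∈ DeltaSet m 2 := by
    intro B hB
    have hBrow : ∀ i : Fin m, rowVal B i = rowVal A i.succ.succ := by
      intro i
      rw [hrowval, (hAz2 i).1, (hAz2 i).2]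
      simp only [zero_mul, zero_add]
      rw [rowVal]
      exact Finset.sum_congr rfl (fun j _ => by rw [hB])
    have hBcol : ∀ j : Fin m, colVal B j = colVal A j.succ.succ := by
      intro j
      rw [hcolval, (hBz2 j).1, (hBz2 j).2]
      simp only [zero_mul, zero_add]
      rw [colVal]
      exact Finset.sum_congr rfl (fun i _ => by rw [hB])
    refine ⟨⟨?_, ?_⟩, ?_, ?_⟩
    · intro i i' hle
      rw [hBrow, hBrow]
      exact hx (Fin.succ_le_succ_iff.mpr (Fin.succ_le_succ_iff.mpr hle))
    · intro j j' hle
      rw [hBcol, hBcol]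
      exact hy (Fin.succ_le_succ_iff.mpr (Fin.succ_le_succ_iff.mpr hle))
    · intro i
      have h := hrow i.succ.succ
      rw [hsumexp (fun j : Fin (m + 2) => (A i.succ.succ j : ℕ))] at h
      rw [(hAz2 i).1, (hAz2 i).2] at h
      calc ∑ j, (B i j : ℕ) = ∑ j : Fin m, (A i.succ.succ j.succ.succ : ℕ) :=
            Finset.sum_congr rfl (fun j _ => by rw [hB])
        _ = 2 := by omega
    · intro j
      have h := hcol j.succ.succ
      rw [hsumexp (fun i : Fin (m + 2) => (A i j.succ.succ : ℕ))] at h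
      rw [(hBz2 j).1, (hBz2 j).2] at h
      calc ∑ i, (B i j : ℕ) = ∑ i : Fin m, (A i.succ.succ j.succ.succ : ℕ) :=
            Finset.sum_congr rfl (fun i _ => by rw [hB])
        _ = 2 := by omega
  exact ⟨key _ (fun i j => rfl), hvan⟩
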